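/- arXiv:1209.0414 — 3 statements merged into one kernel-verified Lean document; each statement's English description precedes it below -/
import Mathlib

section
/- With A and B as above, the product A × B in the category of 2-degenerate 3-computads is not isomorphic to the pointwise product (which would have only one 3-cell): the product object necessarily has exactly two 3-cells. -/
/-!
The source of a 3-cell in a cone over `A` and `B` is a pair of 2-cells sent to `a₁·a₂` in `A`
and to `b₁·b₂` in `B`, so paired up it becomes either `(a₁,b₁)·(a₂,b₂)` or `(a₂,b₁)·(a₁,b₂)`:
there is one possibility for each way of matching the factors of the two products. Hence
`CompAB`, which has a 3-cell for each matching, is the product, and every product has its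
two 3-cells, whereas `A.C3 × B.C3` is a singleton.
-/

open CategoryTheory

/-- A 2-degenerate 3-computad: a single 0-cell, no 1-cells, so the data is a set of
2-cells, a set of 3-cells, and boundary maps into the free commutative monoid
(multisets) on the 2-cells. -/
structure DegComputad where
  C2 : Type
  C3 : Type
  src : C3 → Multiset C2
  tgt : C3 → Multiset C2

/-- Morphisms of 2-degenerate 3-computads. -/
@[ext]
structure DegComputad.Hom (A B : DegComputad) where
  f2 : A.C2 → B.C2
  f3 : A.C3 → B.C3
  src_comm : ∀ e, B.src (f3 e) = Multiset.map f2 (A.src e)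
  tgt_comm : ∀ e, B.tgt (f3 e) = Multiset.map f2 (A.tgt e)

instance : Category DegComputad where
  Hom := DegComputad.Hom
  id A := ⟨id, id, by simp, by simp⟩
  comp f g := ⟨g.f2 ∘ f.f2, g.f3 ∘ f.f3,
    by intro e; simp [f.src_comm, g.src_comm, Multiset.map_map],
    by intro e; simp [f.tgt_comm, g.tgt_comm, Multiset.map_map]⟩

@[simp] lemma DegComputad.id_f2 (A : DegComputad) : (𝟙 A : A ⟶ A).f2 = id := rfl
@[simp] lemma DegComputad.id_f3 (A : DegComputad) : (𝟙 A : A ⟶ A).f3 = id := rfl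
@[simp] lemma DegComputad.comp_f2 {A B C : DegComputad} (f : A ⟶ B) (g : B ⟶ C) :
    (f ≫ g).f2 = g.f2 ∘ f.f2 := rfl
@[simp] lemma DegComputad.comp_f3 {A B C : DegComputad} (f : A ⟶ B) (g : B ⟶ C) :
    (f ≫ g).f3 = g.f3 ∘ f.f3 := rfl
/-- The computad `A`: 2-cells `a₁,a₂,a₃` (as `0,1,2`), one 3-cell `f : a₁·a₂ → a₃`. -/
abbrev CompA : DegComputad := ⟨Fin 3, Unit, fun _ => {0, 1}, fun _ => {2}⟩

/-- The computad `B`: an isomorphic copy of `A`, with 2-cells `b₁,b₂,b₃` and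
one 3-cell `g : b₁·b₂ → b₃`. -/
abbrev CompB : DegComputad := ⟨Fin 3, Unit, fun _ => {0, 1}, fun _ => {2}⟩

/-- The putative product `A × B`: nine 2-cells `(aᵢ,bⱼ)` and two 3-cells
`(f,g)₁ : (a₁,b₁)·(a₂,b₂) → (a₃,b₃)` and `(f,g)₂ : (a₂,b₁)·(a₁,b₂) → (a₃,b₃)`. -/
abbrev CompAB : DegComputad :=
  ⟨Fin 3 × Fin 3, Fin 2,
   fun e => if e = 0 then {((0 : Fin 3), (0 : Fin 3)), (1, 1)} else {(1, 0), (0, 1)},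
   fun _ => {(2, 2)}⟩

/-- First projection `A × B ⟶ A`. -/
def projA : CompAB ⟶ CompA :=
  ⟨Prod.fst, fun _ => (), by decide, by decide⟩

/-- Second projection `A × B ⟶ B`. -/
def projB : CompAB ⟶ CompB :=
  ⟨Prod.snd, fun _ => (), by decide, by decide⟩

open CategoryTheory.Limits

namespace Multiset

variable {α β γ : Type*}

theorem pair_eq_pair_iff {a b c d : α} :
    ({a, b} : Multiset α) = {c, d} ↔ (a = c ∧ b = d) ∨ (a = d ∧ b = c) := by
  constructor
  · intro h
    rcases cons_eq_cons.mp h with ⟨hac, hbd⟩ | ⟨-, s, hb, hd⟩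
    · exact .inl ⟨hac, singleton_inj.mp hbd⟩
    · obtain rfl : s = 0 := card_eq_zero.mp (by simpa using congrArg card hb)
      exact .inr ⟨(singleton_inj.mp hd).symm, singleton_inj.mp hb⟩
  · rintro (⟨rfl, rfl⟩ | ⟨rfl, rfl⟩)
    · rfl
    · exact pair_comm _ _

theorem map_prodMk_eq_pair_or {s : Multiset α} {f : α → β} {g : α → γ} {a b : β} {c d : γ}
    (hf : s.map f = {a, b}) (hg : s.map g = {c, d}) :
    s.map (fun x => (f x, g x)) = {(a, c), (b, d)} ∨
      s.map (fun x => (f x, g x)) = {(a, d), (b, c)} := by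
  obtain ⟨x, y, rfl⟩ := card_eq_two.mp (by simpa using congrArg card hf)
  simp only [insert_eq_cons, map_cons, map_singleton] at hf hg ⊢
  rcases pair_eq_pair_iff.mp hf with ⟨rfl, rfl⟩ | ⟨rfl, rfl⟩ <;>
    rcases pair_eq_pair_iff.mp hg with ⟨rfl, rfl⟩ | ⟨rfl, rfl⟩
  · exact .inl rfl
  · exact .inr rfl
  · exact .inr (pair_comm _ _)
  · exact .inl (pair_comm _ _)

theorem map_prodMk_eq_singleton {s : Multiset α} {f : α → β} {g : α → γ} {b : β} {c : γ}
    (hf : s.map f = {b}) (hg : s.map g = {c}) :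
    s.map (fun x => (f x, g x)) = {(b, c)} := by
  obtain ⟨x, rfl, rfl⟩ := map_eq_singleton.mp hf
  simpa using hg

end Multiset

namespace DegComputad

def cells3 : DegComputad ⥤ Type where
  obj X := X.C3
  map f := TypeCat.ofHom f.f3

theorem Hom.ext_of_injective_src {X Y : DegComputad} (hY : Function.Injective Y.src)
    {m m' : X ⟶ Y} (h : m.f2 = m'.f2) : m = m' := by
  refine Hom.ext h (funext fun e => hY ?_)
  rw [m.src_comm, m'.src_comm, h]

end DegComputad

section ProductAB

variable {T : DegComputad} (f : T ⟶ CompA) (g : T ⟶ CompB)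

theorem map_pairing_src (e : T.C3) :
    (T.src e).map (fun x => (f.f2 x, g.f2 x)) = CompAB.src 0 ∨
      (T.src e).map (fun x => (f.f2 x, g.f2 x)) = CompAB.src 1 := by
  rcases Multiset.map_prodMk_eq_pair_or (f.src_comm e).symm (g.src_comm e).symm with h | h
  · exact .inl h
  · exact .inr (h.trans (Multiset.pair_comm _ _))

def liftAB : T ⟶ CompAB where
  f2 x := (f.f2 x, g.f2 x)
  f3 e := if (T.src e).map (fun x => (f.f2 x, g.f2 x)) = CompAB.src 0 then 0 else 1
  src_comm e := by
    split_ifs with h0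
    · exact h0.symm
    · exact ((map_pairing_src f g e).resolve_left h0).symm
  tgt_comm e := (Multiset.map_prodMk_eq_singleton (f.tgt_comm e).symm (g.tgt_comm e).symm).symm

theorem injective_src_compAB : Function.Injective CompAB.src := by decide

def isLimitProjAB : IsLimit (BinaryFan.mk projA projB) :=
  BinaryFan.isLimitMk (fun s => liftAB s.fst s.snd) (fun _ => rfl) (fun _ => rfl)
    fun _ _ hA hB => DegComputad.Hom.ext_of_injective_src injective_src_compAB <|
      funext fun x => Prod.ext (congrFun (congrArg DegComputad.Hom.f2 hA) x)
        (congrFun (congrArg DegComputad.Hom.f2 hB) x)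

end ProductAB

/-- The product of `A` and `B` (each having one 3-cell) in the category of 2-degenerate
3-computads necessarily has exactly two 3-cells; in particular its 3-cell set is not in
bijection with `A.C3 × B.C3` (a singleton), so the product is not isomorphic to the
pointwise product. -/
theorem stmt4 (P : DegComputad) (p : P ⟶ CompA) (q : P ⟶ CompB)
    (h : Nonempty (IsLimit (BinaryFan.mk p q))) :
    Nonempty (P.C3 ≃ Fin 2) ∧ ¬ Nonempty (P.C3 ≃ CompA.C3 × CompB.C3) := by
  obtain ⟨hl⟩ := h
  have e : P.C3 ≃ Fin 2 :=
    (DegComputad.cells3.mapIso (hl.conePointUniqueUpToIso isLimitProjAB)).toEquiv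
  refine ⟨⟨e⟩, fun ⟨e'⟩ => ?_⟩
  simpa using Fintype.card_congr (e.symm.trans e')
end

section
/- With the data above, the canonical comparison morphism P → C × B from the coequalizer of α₁ × id_B and α₂ × id_B to the product of the coequalizer C with B is not an isomorphism: it identifies the two distinct 3-cells of P. -/
open CategoryTheory

/-- The computad `E`: two 2-cells `x,y` (as `0,1`) and no 3-cells. -/
abbrev CompE : DegComputad := ⟨Fin 2, Empty, fun e => e.elim, fun e => e.elim⟩

/-- The morphism `α₁ : E ⟶ A`, `x ↦ a₁`, `y ↦ a₃`. -/
def alpha1 : CompE ⟶ CompA := ⟨![0, 2], fun e => e.elim, fun e => e.elim, fun e => e.elim⟩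

/-- The morphism `α₂ : E ⟶ A`, `x ↦ a₂`, `y ↦ a₃`. -/
def alpha2 : CompE ⟶ CompA := ⟨![1, 2], fun e => e.elim, fun e => e.elim, fun e => e.elim⟩

/-- The coequalizer `C` of `α₁, α₂`: two 2-cells `ā, a₃` (as `0,1`) and one 3-cell
`f̄ : ā·ā → a₃`. -/
abbrev CompC : DegComputad := ⟨Fin 2, Unit, fun _ => {0, 0}, fun _ => {1}⟩

/-- The quotient morphism `A ⟶ C`, identifying `a₁` and `a₂`. -/
def qmap : CompA ⟶ CompC := ⟨![0, 0, 1], fun _ => (), by decide, by decide⟩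

/-- The product `E × B`: 2-cells `(x,bⱼ)`, `(y,bⱼ)`, and no 3-cells. -/
abbrev CompEB : DegComputad := ⟨Fin 2 × Fin 3, Empty, fun e => e.elim, fun e => e.elim⟩

/-- The morphism `α₁ × id_B : E × B ⟶ A × B`. -/
def alpha1B : CompEB ⟶ CompAB :=
  ⟨Prod.map ![0, 2] id, fun e => e.elim, fun e => e.elim, fun e => e.elim⟩

/-- The morphism `α₂ × id_B : E × B ⟶ A × B`. -/
def alpha2B : CompEB ⟶ CompAB :=
  ⟨Prod.map ![1, 2] id, fun e => e.elim, fun e => e.elim, fun e => e.elim⟩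

/-- The coequalizer `P` of `α₁ × 1, α₂ × 1`: 2-cells `(ā,bⱼ)`, `(a₃,bⱼ)` and two
3-cells, both with source `(ā,b₁)·(ā,b₂)` and target `(a₃,b₃)`. -/
abbrev CompP : DegComputad :=
  ⟨Fin 2 × Fin 3, Fin 2, fun _ => {((0 : Fin 2), (0 : Fin 3)), (0, 1)}, fun _ => {(1, 2)}⟩

/-- The quotient morphism `A × B ⟶ P`. -/
def piP : CompAB ⟶ CompP := ⟨Prod.map ![0, 0, 1] id, id, by decide, by decide⟩

/-- The product `C × B`: 2-cells `(ā,bⱼ)`, `(a₃,bⱼ)` and exactly one 3-cell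
`(f̄,g) : (ā,b₁)·(ā,b₂) → (a₃,b₃)`. -/
abbrev CompCB : DegComputad :=
  ⟨Fin 2 × Fin 3, Unit, fun _ => {((0 : Fin 2), (0 : Fin 3)), (0, 1)}, fun _ => {(1, 2)}⟩

/-- The morphism `q × id_B : A × B ⟶ C × B`. -/
def muCB : CompAB ⟶ CompCB := ⟨Prod.map ![0, 0, 1] id, fun _ => (), by decide, by decide⟩

open CategoryTheory.Limits

/- Quotienting `A × B` by `α₁ × 1, α₂ × 1` glues `(a₁,bⱼ)` to `(a₂,bⱼ)` but keeps both 3-cells,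
which become parallel in `P`. In `C × B` a 3-cell is a pair of 3-cells, and `C`, `B` have one
each, so the comparison `P ⟶ C × B` collapses the two 3-cells of `P` and cannot be invertible. -/

theorem Multiset.map_prodMk_eq_of_map_eq_replicate {X α β : Type*} {s : Multiset X}
    {u : X → α} {v : X → β} {a : α} {n : ℕ} (h : s.map u = Multiset.replicate n a) :
    s.map (fun x => (u x, v x)) = (s.map v).map (Prod.mk a) := by
  have hu : ∀ x ∈ s, u x = a := fun x hx =>
    Multiset.eq_of_mem_replicate (h ▸ Multiset.mem_map_of_mem u hx)
  rw [Multiset.map_map]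
  exact Multiset.map_congr rfl fun x hx => by simp [hu x hx]

namespace DegComputad

theorem epi_of_surjective {X Y : DegComputad} (f : X ⟶ Y) (h2 : Function.Surjective f.f2)
    (h3 : Function.Surjective f.f3) : Epi f := by
  refine ⟨fun g g' hgg' => Hom.ext ?_ ?_⟩
  · funext y
    obtain ⟨x, rfl⟩ := h2 y
    exact congrFun (congrArg Hom.f2 hgg') x
  · funext y
    obtain ⟨x, rfl⟩ := h3 y
    exact congrFun (congrArg Hom.f3 hgg') x

theorem injective_f3_of_isIso {X Y : DegComputad} (f : X ⟶ Y) [IsIso f] :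
    Function.Injective f.f3 :=
  Function.LeftInverse.injective (g := (inv f).f3) fun x =>
    congrFun (congrArg Hom.f3 (IsIso.hom_inv_id f)) x

end DegComputad

open DegComputad

theorem f2_zero_eq_f2_one_of_coequalizes {T : DegComputad} (k : CompAB ⟶ T)
    (hk : alpha1B ≫ k = alpha2B ≫ k) (j : Fin 3) : k.f2 (0, j) = k.f2 (1, j) :=
  congrFun (congrArg Hom.f2 hk) (0, j)

theorem f2_eq_comp_piP {T : DegComputad} (k : CompAB ⟶ T) (hk : alpha1B ≫ k = alpha2B ≫ k) :
    k.f2 = (fun z => k.f2 (![0, 2] z.1, z.2)) ∘ piP.f2 := by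
  funext ⟨i, j⟩
  fin_cases i
  · rfl
  · exact (f2_zero_eq_f2_one_of_coequalizes k hk j).symm
  · rfl

/-- Since `piP.f3 = id`, a morphism out of `A × B` coequalizing `α₁ × 1, α₂ × 1` descends to `P`
by keeping its 3-cell part. -/
def descP {T : DegComputad} (k : CompAB ⟶ T) (hk : alpha1B ≫ k = alpha2B ≫ k) :
    CompP ⟶ T where
  f2 z := k.f2 (![0, 2] z.1, z.2)
  f3 := k.f3
  src_comm e := by
    rw [k.src_comm, f2_eq_comp_piP k hk, ← Multiset.map_map, ← piP.src_comm]; rfl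
  tgt_comm e := by
    rw [k.tgt_comm, f2_eq_comp_piP k hk, ← Multiset.map_map, ← piP.tgt_comm]; rfl

theorem piP_comp_descP {T : DegComputad} (k : CompAB ⟶ T) (hk : alpha1B ≫ k = alpha2B ≫ k) :
    piP ≫ descP k hk = k :=
  Hom.ext (f2_eq_comp_piP k hk).symm rfl

instance epi_piP : Epi piP := by
  refine epi_of_surjective piP ?_ Function.surjective_id
  rintro ⟨i, j⟩
  fin_cases i
  · exact ⟨(0, j), rfl⟩
  · exact ⟨(2, j), rfl⟩

theorem alpha1B_comp_piP : alpha1B ≫ piP = alpha2B ≫ piP :=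
  Hom.ext (by decide) (funext fun e => e.elim)

def isColimitCoforkP : IsColimit (Cofork.ofπ piP alpha1B_comp_piP) :=
  Cofork.IsColimit.mk _ (fun s => descP s.π s.condition)
    (fun s => piP_comp_descP s.π s.condition)
    (fun s _ hm => (cancel_epi piP).mp (hm.trans (piP_comp_descP s.π s.condition).symm))

def fstCB : CompCB ⟶ CompC := ⟨Prod.fst, fun _ => (), by decide, by decide⟩

def sndCB : CompCB ⟶ CompB := ⟨Prod.snd, fun _ => (), by decide, by decide⟩

/-- Compatibility with boundaries forces `f` to send every source to `ā·ā` and every target to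
`a₃`, so pairing with `g` lands on the boundary of the unique 3-cell of `C × B`. -/
def liftCB {T : DegComputad} (f : T ⟶ CompC) (g : T ⟶ CompB) : T ⟶ CompCB where
  f2 x := (f.f2 x, g.f2 x)
  f3 _ := ()
  src_comm e := by
    rw [Multiset.map_prodMk_eq_of_map_eq_replicate (n := 2) (f.src_comm e).symm,
      ← g.src_comm]; rfl
  tgt_comm e := by
    rw [Multiset.map_prodMk_eq_of_map_eq_replicate (n := 1) (f.tgt_comm e).symm,
      ← g.tgt_comm]; rfl

def isLimitFanCB : IsLimit (BinaryFan.mk fstCB sndCB) :=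
  BinaryFan.IsLimit.mk _ liftCB (fun _ _ => rfl) (fun _ _ => rfl)
    (fun _ _ _ hf hg => Hom.ext
      (funext fun x => Prod.ext (congrFun (congrArg Hom.f2 hf) x) (congrFun (congrArg Hom.f2 hg) x))
      rfl)

def comparisonPCB : CompP ⟶ CompCB := ⟨id, fun _ => (), by decide, by decide⟩

/-- `P` is the coequalizer of `α₁ × 1` and `α₂ × 1`, `C × B` (with the evident
projections) is the product of `C` and `B`, and the canonical comparison morphism
`P ⟶ C × B` (the unique morphism commuting with the quotient maps from `A × B`)
exists, is unique, and is not an isomorphism: it identifies the two distinct 3-cells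
of `P`. -/
theorem stmt8 :
    (∃ w : alpha1B ≫ piP = alpha2B ≫ piP, Nonempty (IsColimit (Cofork.ofπ piP w))) ∧
    (∃ (p : CompCB ⟶ CompC) (q : CompCB ⟶ CompB),
      Nonempty (IsLimit (BinaryFan.mk p q))) ∧
    (∃! h : CompP ⟶ CompCB, piP ≫ h = muCB) ∧
    (∀ h : CompP ⟶ CompCB, piP ≫ h = muCB →
      ¬ IsIso h ∧ ∃ e₁ e₂ : CompP.C3, e₁ ≠ e₂ ∧ h.f3 e₁ = h.f3 e₂) := by
  refine ⟨⟨alpha1B_comp_piP, ⟨isColimitCoforkP⟩⟩, ⟨fstCB, sndCB, ⟨isLimitFanCB⟩⟩,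
    ⟨comparisonPCB, rfl, fun h hh => (cancel_epi piP).mp (hh.trans rfl)⟩, fun h _ => ?_⟩
  have identifies : h.f3 0 = h.f3 1 := rfl
  refine ⟨fun _ => absurd (injective_f3_of_isIso h identifies) (by decide), 0, 1, by decide,
    identifies⟩
end

section
/- The category of 2-degenerate 3-computads is not equivalent to a presheaf category. -/
open CategoryTheory

/-!
In a presheaf category `X × −` is a left adjoint, so it preserves coequalizers, and cartesian
closedness transfers along equivalences. For 2-degenerate 3-computads this fails for `B`, a single
3-cell `g : b₁ · b₂ → b₃`. Identifying `b₁` with `b₂` is a coequalizer `q : B → Q`. The two 3-cells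
of `B × B` are the two matchings of the sources of the factors; the maps `(id, id)` and
`(id, swap) : B → B × B` hit different ones, yet agree after `B × q`. A map out of `B × B` that
identifies the 2-cells `(b, b₁)` and `(b, b₂)` but keeps both 3-cells apart coequalizes `B × b₁`
and `B × b₂` but does not factor through `B × q`.
-/

open CategoryTheory Limits MonoidalCategory CartesianMonoidalCategory

theorem Multiset.pair_eq_pair_iff_s10 {α : Type*} {p q r s : α} :
    ({p, q} : Multiset α) = {r, s} ↔ p = r ∧ q = s ∨ p = s ∧ q = r := by
  change (↑[p, q] : Multiset α) = ↑[r, s] ↔ _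
  rw [Multiset.coe_eq_coe, List.perm_pair]
  simp

theorem Multiset.eq_singleton_of_map_fst_of_map_snd {α β : Type*} {M : Multiset (α × β)}
    {a : α} {b : β} (h₁ : M.map Prod.fst = {a}) (h₂ : M.map Prod.snd = {b}) :
    M = {(a, b)} := by
  obtain ⟨z, rfl⟩ := Multiset.card_eq_one.mp (by simpa using congrArg Multiset.card h₁)
  simp only [Multiset.map_singleton, Multiset.singleton_inj] at h₁ h₂
  rw [← h₁, ← h₂]

theorem Multiset.eq_pair_or_of_map_fst_of_map_snd {α β : Type*} {M : Multiset (α × β)}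
    {a a' : α} {b b' : β} (h₁ : M.map Prod.fst = {a, a'}) (h₂ : M.map Prod.snd = {b, b'}) :
    M = {(a, b), (a', b')} ∨ M = {(a, b'), (a', b)} := by
  obtain ⟨⟨x₁, x₂⟩, ⟨y₁, y₂⟩, rfl⟩ :=
    Multiset.card_eq_two.mp (by simpa using congrArg Multiset.card h₁)
  replace h₁ : ({x₁, y₁} : Multiset α) = {a, a'} := by simpa using h₁
  replace h₂ : ({x₂, y₂} : Multiset β) = {b, b'} := by simpa using h₂
  rw [Multiset.pair_eq_pair_iff_s10] at h₁ h₂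
  simp only [Multiset.pair_eq_pair_iff_s10, Prod.mk.injEq]
  tauto

namespace DegComputad

theorem hom_ext {X Y : DegComputad} {f g : X ⟶ Y} (h₂ : f.f2 = g.f2) (h₃ : f.f3 = g.f3) :
    f = g :=
  Hom.ext h₂ h₃

theorem hom_ext_of_isEmpty {X Y : DegComputad} [IsEmpty X.C3] {f g : X ⟶ Y}
    (h : f.f2 = g.f2) : f = g :=
  hom_ext h (funext isEmptyElim)

theorem isEmpty_C3_of_hom {X Y : DegComputad} (f : X ⟶ Y) [IsEmpty Y.C3] : IsEmpty X.C3 :=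
  f.f3.isEmpty

abbrev point : DegComputad where
  C2 := Unit
  C3 := Empty
  src := isEmptyElim
  tgt := isEmptyElim

/-- The computad `B` of the paper, with 2-cells `b₁, b₂, b₃` numbered `0, 1, 2`. -/
abbrev cell : DegComputad where
  C2 := Fin 3
  C3 := Unit
  src _ := {0, 1}
  tgt _ := {2}

abbrev fold : DegComputad where
  C2 := Fin 2
  C3 := Unit
  src _ := {0, 0}
  tgt _ := {1}

/-- `cell × cell`: its 3-cells are the two ways of matching the sources of the two factors. -/
abbrev cellProd : DegComputad where
  C2 := Fin 3 × Fin 3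
  C3 := Bool
  src b := if b then {(0, 0), (1, 1)} else {(0, 1), (1, 0)}
  tgt _ := {(2, 2)}

/-- `cell × fold` with its single 3-cell doubled. -/
abbrev cellFoldDoubled : DegComputad where
  C2 := Fin 3 × Fin 2
  C3 := Bool
  src _ := {(0, 0), (1, 0)}
  tgt _ := {(2, 1)}

def pick (i : Fin 3) : point ⟶ cell :=
  ⟨fun _ => i, isEmptyElim, isEmptyElim, isEmptyElim⟩

def collapseFun : Fin 3 → Fin 2 := ![0, 0, 1]

def collapse : cell ⟶ fold :=
  ⟨collapseFun, id, by decide, by decide⟩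

def swap : cell ⟶ cell :=
  ⟨Equiv.swap 0 1, id, by decide, by decide⟩

theorem pick_comp_collapse : pick 0 ≫ collapse = pick 1 ≫ collapse :=
  hom_ext_of_isEmpty rfl

theorem swap_comp_collapse : swap ≫ collapse = collapse :=
  hom_ext (by decide) rfl

def collapseDesc {Y : DegComputad} (f : cell ⟶ Y) (h : f.f2 0 = f.f2 1) : fold ⟶ Y where
  f2 j := f.f2 (![0, 2] j)
  f3 := f.f3
  src_comm _ := by
    rw [f.src_comm]
    simp [h]
  tgt_comm _ := f.tgt_comm ()

theorem collapse_comp_collapseDesc {Y : DegComputad} (f : cell ⟶ Y) (h : f.f2 0 = f.f2 1) :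
    collapse ≫ collapseDesc f h = f := by
  refine hom_ext (funext fun i => ?_) rfl
  fin_cases i
  exacts [rfl, h, rfl]

instance : Epi collapse where
  left_cancellation m m' h := by
    have h₂ := congr_arg Hom.f2 h
    have h₃ := congr_arg Hom.f3 h
    refine hom_ext (funext fun j => ?_) (funext fun x => congr_fun h₃ x)
    fin_cases j
    exacts [congr_fun h₂ 0, congr_fun h₂ 2]

def isColimitCollapse : IsColimit (Cofork.ofπ collapse pick_comp_collapse) :=
  Cofork.IsColimit.mk _
    (fun s => collapseDesc s.π (congr_arg (fun f => f.f2 ()) s.condition))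
    (fun _ => collapse_comp_collapseDesc _ _)
    (fun _ _ hm => (cancel_epi collapse).1 (hm.trans (collapse_comp_collapseDesc _ _).symm))

namespace cellProd

def fst : cellProd ⟶ cell := ⟨Prod.fst, fun _ => (), by decide, by decide⟩

def snd : cellProd ⟶ cell := ⟨Prod.snd, fun _ => (), by decide, by decide⟩

theorem src_injective : Function.Injective cellProd.src := by decide

theorem hom_f2 {X : DegComputad} (k : X ⟶ cellProd) :
    k.f2 = fun x => ((k ≫ fst).f2 x, (k ≫ snd).f2 x) :=
  rfl

def lift {X : DegComputad} (f g : X ⟶ cell) : X ⟶ cellProd where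
  f2 x := (f.f2 x, g.f2 x)
  f3 x := decide ((X.src x).map (fun y => (f.f2 y, g.f2 y)) = {(0, 0), (1, 1)})
  src_comm x := by
    have h₁ : ((X.src x).map fun y => (f.f2 y, g.f2 y)).map Prod.fst = {0, 1} := by
      rw [Multiset.map_map]; exact (f.src_comm x).symm
    have h₂ : ((X.src x).map fun y => (f.f2 y, g.f2 y)).map Prod.snd = {0, 1} := by
      rw [Multiset.map_map]; exact (g.src_comm x).symm
    rcases Multiset.eq_pair_or_of_map_fst_of_map_snd h₁ h₂ with h | h <;> rw [h] <;> decide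
  tgt_comm x := by
    refine (Multiset.eq_singleton_of_map_fst_of_map_snd ?_ ?_).symm <;> rw [Multiset.map_map]
    exacts [(f.tgt_comm x).symm, (g.tgt_comm x).symm]

def collapseSnd : cellProd ⟶ cellFoldDoubled :=
  ⟨Prod.map id collapseFun, id, by decide, by decide⟩

theorem comp_collapseSnd_eq {X : DegComputad} [IsEmpty X.C3] {k k' : X ⟶ cellProd}
    (h₁ : k ≫ fst = k' ≫ fst) (h₂ : (k ≫ snd) ≫ collapse = (k' ≫ snd) ≫ collapse) :
    k ≫ collapseSnd = k' ≫ collapseSnd :=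
  hom_ext_of_isEmpty <| funext fun x =>
    Prod.ext (congr_fun (congr_arg Hom.f2 h₁) x) (congr_fun (congr_arg Hom.f2 h₂) x)

theorem f3_eq_of_comp {k : cell ⟶ cellProd} {f g : cell ⟶ cell} (h₁ : k ≫ fst = f)
    (h₂ : k ≫ snd = g) {b : Bool}
    (h : cellProd.src b = (cell.src ()).map fun i => (f.f2 i, g.f2 i)) : k.f3 () = b := by
  apply src_injective
  rw [k.src_comm, hom_f2, h₁, h₂, h]

end cellProd

section

variable [CartesianMonoidalCategory DegComputad]

def toCellProd : cell ⊗ cell ⟶ cellProd := cellProd.lift (fst _ _) (snd _ _)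

theorem toCellProd_fst : toCellProd ≫ cellProd.fst = fst _ _ := rfl

theorem toCellProd_snd : toCellProd ≫ cellProd.snd = snd _ _ := rfl

theorem whiskerLeft_pick_comp_toCellProd_collapseSnd :
    cell ◁ pick 0 ≫ toCellProd ≫ cellProd.collapseSnd =
      cell ◁ pick 1 ≫ toCellProd ≫ cellProd.collapseSnd := by
  have := isEmpty_C3_of_hom (snd cell point)
  have h_fst (i : Fin 3) : (cell ◁ pick i ≫ toCellProd) ≫ cellProd.fst = fst _ _ := by
    rw [Category.assoc, toCellProd_fst, whiskerLeft_fst]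
  have h_snd (i : Fin 3) : (cell ◁ pick i ≫ toCellProd) ≫ cellProd.snd = snd _ _ ≫ pick i := by
    rw [Category.assoc, toCellProd_snd, whiskerLeft_snd]
  simp only [← Category.assoc]
  apply cellProd.comp_collapseSnd_eq
  · rw [h_fst, h_fst]
  · rw [h_snd, h_snd, Category.assoc, Category.assoc, pick_comp_collapse]

theorem lift_comp_toCellProd_f3 (f g : cell ⟶ cell) {b : Bool}
    (h : cellProd.src b = (cell.src ()).map fun i => (f.f2 i, g.f2 i)) :
    (lift f g ≫ toCellProd).f3 () = b :=
  cellProd.f3_eq_of_comp (by rw [Category.assoc, toCellProd_fst, lift_fst])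
    (by rw [Category.assoc, toCellProd_snd, lift_snd]) h

theorem not_preservesColimit_tensorLeft :
    ¬ PreservesColimit (parallelPair (pick 0) (pick 1)) (tensorLeft cell) := by
  intro _
  have hπ := isColimitCoforkMapOfIsColimit (tensorLeft cell) pick_comp_collapse isColimitCollapse
  obtain ⟨d, hd⟩ := Cofork.IsColimit.desc' hπ _ whiskerLeft_pick_comp_toCellProd_collapseSnd
  change cell ◁ collapse ≫ d = _ at hd
  have h_diag_swap : lift (𝟙 cell) (𝟙 cell) ≫ toCellProd ≫ cellProd.collapseSnd =
      lift (𝟙 cell) swap ≫ toCellProd ≫ cellProd.collapseSnd := by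
    rw [← hd, lift_whiskerLeft_assoc, lift_whiskerLeft_assoc, swap_comp_collapse,
      Category.id_comp]
  have h_diag : (lift (𝟙 cell) (𝟙 cell) ≫ toCellProd).f3 () = true :=
    lift_comp_toCellProd_f3 _ _ (by decide)
  have h_swap : (lift (𝟙 cell) swap ≫ toCellProd).f3 () = false :=
    lift_comp_toCellProd_f3 _ _ (by decide)
  exact absurd (h_diag.symm.trans ((congr_arg (fun f => f.f3 ()) h_diag_swap).trans h_swap))
    (by decide)

theorem isEmpty_monoidalClosed :
    IsEmpty (MonoidalClosed DegComputad) :=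
  ⟨fun _ => not_preservesColimit_tensorLeft inferInstance⟩

end

end DegComputad

/-- The category of 2-degenerate 3-computads is not equivalent to any presheaf
category `Set^{Cᵒᵖ}` on a small category `C`. -/
theorem stmt10 :
    ¬ ∃ (C : Type) (_ : SmallCategory C), Nonempty (DegComputad ≌ (Cᵒᵖ ⥤ Type)) := by
  rintro ⟨C, _, ⟨e⟩⟩
  have : HasFiniteProducts DegComputad :=
    ⟨fun _ => Adjunction.hasLimitsOfShape_of_equivalence e.functor⟩
  let _ := CartesianMonoidalCategory.ofHasFiniteProducts (C := DegComputad)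
  exact DegComputad.isEmpty_monoidalClosed.false (cartesianClosedOfEquiv e.symm)
end
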